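/- Let G be a finite group. Then Rocco's group ν(G) is finite. -/

import Mathlib

/-- The paper's commutator convention: `[x, y] = x⁻¹ * y⁻¹ * x * y`. -/
def cm {G : Type*} [Group G] (x y : G) : G := x⁻¹ * y⁻¹ * x * y

/-- Conjugation convention: `x ^ y = y⁻¹ * x * y`. -/
def cj {G : Type*} [Group G] (x y : G) : G := y⁻¹ * x * y

namespace Rocco

variable (G : Type*) [Group G]

/-- The defining relators of Rocco's group `ν(G)`, inside the free product `G ∗ G`
(the second factor playing the role of the isomorphic copy `G^φ`). -/
def rels : Set (Monoid.Coprod G G) :=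
  {x | ∃ g₁ g₂ g₃ : G,
    x = cj (cm (Monoid.Coprod.inl g₁) (Monoid.Coprod.inr g₂)) (Monoid.Coprod.inl g₃) *
        (cm (Monoid.Coprod.inl (cj g₁ g₃)) (Monoid.Coprod.inr (cj g₂ g₃)))⁻¹ ∨
    x = cj (cm (Monoid.Coprod.inl g₁) (Monoid.Coprod.inr g₂)) (Monoid.Coprod.inl g₃) *
        (cj (cm (Monoid.Coprod.inl g₁) (Monoid.Coprod.inr g₂)) (Monoid.Coprod.inr g₃))⁻¹}

/-- Rocco's construction `ν(G)`. -/
abbrev nu := Monoid.Coprod G G ⧸ Subgroup.normalClosure (rels G)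

/-- The canonical image of `G` in `ν(G)`. -/
def ν₁ : G →* nu G := (QuotientGroup.mk' (Subgroup.normalClosure (rels G))).comp Monoid.Coprod.inl

/-- The canonical image of the copy `G^φ` in `ν(G)`; `ν₂ g` plays the role of `g^φ`. -/
def ν₂ : G →* nu G := (QuotientGroup.mk' (Subgroup.normalClosure (rels G))).comp Monoid.Coprod.inr

end Rocco

/-!
Let `Δ = [G, G^φ]` be the subgroup of `ν(G)` generated by the commutators `[g, h^φ]`. The
defining relations make this generating set stable under conjugation by `G` and by `G^φ`, so `Δ`
is normal and `ν(G)/Δ` is a quotient of `G × G`.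

The homomorphism `codiag : ν(G) → G` identifying `G` with `G^φ` has the property that
conjugation by `d ∈ Δ` agrees on `Δ` with conjugation by `ν₁ (codiag d)`. Hence
`ker codiag ∩ Δ` is central in `Δ`, the centre of `Δ` has finite index, and `[Δ, Δ]` is finite
by Schur's theorem.

The abelianization `Δᵃᵇ` is generated by the `|G|²` images `t g h` of the `[g, h^φ]`, and `G`
acts on it through `ν₁`, commutators of `G` acting trivially. With `n = |G|` this makes
`g ↦ (t g h)^n` a homomorphism `G → Δᵃᵇ`, so `(t g h)^(n²) = 1`: `Δᵃᵇ` is a finitely generated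
torsion abelian group, hence finite, and so are `Δ` and `ν(G)`.
-/

open Subgroup
open scoped commutatorElement

section

variable {G : Type*} [Group G]

lemma cj_mul_right (x a b : G) : cj x (a * b) = cj (cj x a) b := by simp only [cj]; group

lemma cj_cm (x y a : G) : cj (cm x y) a = cm (cj x a) (cj y a) := by simp only [cm, cj]; group

lemma cj_eq_mul_cm (x a : G) : cj x a = x * cm x a := by simp only [cm, cj]; group

@[simp] lemma cm_one_left (y : G) : cm 1 y = 1 := by simp [cm]

@[simp] lemma cm_one_right (x : G) : cm x 1 = 1 := by simp [cm]

lemma cm_mul_left (x x' y : G) : cm (x * x') y = cj (cm x y) x' * cm x' y := by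
  simp only [cm, cj]; group

lemma cm_mul_right (x y y' : G) : cm x (y * y') = cm x y' * cj (cm x y) y' := by
  simp only [cm, cj]; group

lemma cm_eq_one_iff_commute {x y : G} : cm x y = 1 ↔ Commute x y := by
  rw [show cm x y = ⁅x⁻¹, y⁻¹⁆ by simp [cm, commutatorElement_def],
    commutatorElement_eq_one_iff_commute, Commute.inv_inv_iff]

lemma map_cj {H : Type*} [Group H] (f : G →* H) (x a : G) : f (cj x a) = cj (f x) (f a) := by
  simp [cj]

lemma map_cm {H : Type*} [Group H] (f : G →* H) (x y : G) : f (cm x y) = cm (f x) (f y) := by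
  simp [cm]

lemma Subgroup.mem_normalizer_of_cj_mem {s : Set G} {g : G} (h : ∀ x ∈ s, cj x g ∈ s)
    (h' : ∀ x ∈ s, cj x g⁻¹ ∈ s) : g ∈ normalizer s := by
  refine mem_set_normalizer_iff''.2 fun x => ⟨h x, fun hx => ?_⟩
  simpa [cj, mul_assoc] using h' _ hx

lemma cj_eq_of_mk_centralizer_eq {H : Subgroup G} [H.Normal] {x u v : G} (hx : x ∈ H)
    (h : (u : G ⧸ centralizer (H : Set G)) = v) : cj x u = cj x v := by
  have hw := mem_centralizer_iff.1 (QuotientGroup.eq.1 h) (cj x u)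
    (by simpa [cj] using ‹H.Normal›.conj_mem x hx u⁻¹)
  rw [← mul_inv_cancel_left u v, cj_mul_right]
  nth_rw 2 [cj]
  rw [mul_assoc, hw, inv_mul_cancel_left]

lemma Abelianization.of_cj (x a : G) : Abelianization.of (cj x a) = Abelianization.of x := by
  simp [cj, mul_comm]

lemma commutatorElement_mul_mem_center_left (a b : G) {z : G}
    (hz : z ∈ center G) : ⁅a * z, b⁆ = ⁅a, b⁆ := by
  rw [commutatorElement_def, commutatorElement_def, mul_inv_rev, mul_assoc a z,
    ← mem_center_iff.1 hz b]
  group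

lemma commutatorElement_mul_mem_center_right (a b : G) {z : G}
    (hz : z ∈ center G) : ⁅a, b * z⁆ = ⁅a, b⁆ := by
  rw [commutatorElement_def, commutatorElement_def, mul_inv_rev, mul_assoc a (b * z),
    mul_assoc b, ← mem_center_iff.1 hz a⁻¹]
  group

/-- Together with `Mathlib`'s instance `Finite (commutatorSet G) → Finite (commutator G)`, this is
Schur's theorem. -/
instance finite_commutatorSet_of_finiteIndex_center [(center G).FiniteIndex] :
    Finite (commutatorSet G) := by
  have hsub : commutatorSet G ⊆
      Set.range fun p : (G ⧸ center G) × (G ⧸ center G) => ⁅p.1.out, p.2.out⁆ := by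
    rintro _ ⟨a, b, rfl⟩
    obtain ⟨z, hz⟩ := QuotientGroup.mk_out_eq_mul (center G) a
    obtain ⟨w, hw⟩ := QuotientGroup.mk_out_eq_mul (center G) b
    exact ⟨(a, b), by simp only [hz, hw, commutatorElement_mul_mem_center_left _ _ z.2,
      commutatorElement_mul_mem_center_right _ _ w.2]⟩
  exact ((Set.finite_range _).subset hsub).to_subtype

end

namespace Rocco

variable {G : Type*} [Group G]

def crossComm (g h : G) : nu G := cm (ν₁ G g) (ν₂ G h)

lemma mk_eq_one_of_mem_rels {x : Monoid.Coprod G G} (hx : x ∈ rels G) :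
    QuotientGroup.mk' (normalClosure (rels G)) x = 1 :=
  (QuotientGroup.eq_one_iff x).2 (subset_normalClosure hx)

lemma cj_crossComm_ν₁ (g h k : G) :
    cj (crossComm g h) (ν₁ G k) = crossComm (cj g k) (cj h k) := by
  have := mk_eq_one_of_mem_rels ⟨g, h, k, Or.inl rfl⟩
  rwa [map_mul, map_inv, map_cj, map_cm, map_cm, mul_inv_eq_one] at this

lemma cj_crossComm_ν₁_eq_cj_ν₂ (g h k : G) :
    cj (crossComm g h) (ν₁ G k) = cj (crossComm g h) (ν₂ G k) := by
  have := mk_eq_one_of_mem_rels ⟨g, h, k, Or.inr rfl⟩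
  rwa [map_mul, map_inv, map_cj, map_cj, map_cm, mul_inv_eq_one] at this

lemma cj_crossComm_ν₂ (g h k : G) :
    cj (crossComm g h) (ν₂ G k) = crossComm (cj g k) (cj h k) := by
  rw [← cj_crossComm_ν₁_eq_cj_ν₂, cj_crossComm_ν₁]

variable (G) in
lemma closure_range_ν₁_union_range_ν₂ :
    closure (Set.range (ν₁ G) ∪ Set.range (ν₂ G)) = ⊤ := by
  refine (eq_top_iff' _).2 fun x => ?_
  obtain ⟨y, rfl⟩ := QuotientGroup.mk'_surjective (normalClosure (rels G)) x
  induction y using Monoid.Coprod.induction_on with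
  | inl g => exact subset_closure (Or.inl ⟨g, rfl⟩)
  | inr g => exact subset_closure (Or.inr ⟨g, rfl⟩)
  | mul y z hy hz => rw [map_mul]; exact mul_mem hy hz

variable (G) in
def crossComms : Set (nu G) := Set.range fun p : G × G => crossComm p.1 p.2

variable (G) in
/-- The subgroup `[G, G^φ]` of `ν(G)`. -/
def crossCommutator : Subgroup (nu G) := closure (crossComms G)

lemma crossComm_mem (g h : G) : crossComm g h ∈ crossCommutator G :=
  subset_closure ⟨(g, h), rfl⟩

lemma normalizer_crossComms_eq_top : normalizer (crossComms G) = ⊤ := by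
  have hν₁ (k : G) : ν₁ G k ∈ normalizer (crossComms G) := by
    refine mem_normalizer_of_cj_mem ?_ ?_ <;> rintro _ ⟨⟨g, h⟩, rfl⟩
    · exact ⟨(cj g k, cj h k), (cj_crossComm_ν₁ g h k).symm⟩
    · rw [← map_inv]; exact ⟨(cj g k⁻¹, cj h k⁻¹), (cj_crossComm_ν₁ g h k⁻¹).symm⟩
  have hν₂ (k : G) : ν₂ G k ∈ normalizer (crossComms G) := by
    refine mem_normalizer_of_cj_mem ?_ ?_ <;> rintro _ ⟨⟨g, h⟩, rfl⟩
    · exact ⟨(cj g k, cj h k), (cj_crossComm_ν₂ g h k).symm⟩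
    · rw [← map_inv]; exact ⟨(cj g k⁻¹, cj h k⁻¹), (cj_crossComm_ν₂ g h k⁻¹).symm⟩
  rw [eq_top_iff, ← closure_range_ν₁_union_range_ν₂, closure_le]
  rintro _ (⟨k, rfl⟩ | ⟨k, rfl⟩)
  exacts [hν₁ k, hν₂ k]

instance : (crossCommutator G).Normal :=
  normalizer_eq_top_iff.1 <| top_unique <|
    normalizer_crossComms_eq_top.symm.le.trans (normalizer_le_normalizer_closure _)

variable (G) in
def codiag : nu G →* G :=
  QuotientGroup.lift _ (Monoid.Coprod.lift (.id G) (.id G)) <| normalClosure_le_normal <| by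
    rintro _ ⟨g₁, g₂, g₃, rfl | rfl⟩ <;> simp [map_cj, map_cm, cj_cm]

@[simp] lemma codiag_crossComm (g h : G) : codiag G (crossComm g h) = cm g h :=
  map_cm (codiag G) _ _

lemma mk_ν₁_eq_mk_ν₂ (k : G) :
    (ν₁ G k : nu G ⧸ centralizer (crossCommutator G : Set (nu G))) = ν₂ G k := by
  rw [QuotientGroup.eq_iff_div_mem, crossCommutator, centralizer_closure, mem_centralizer_iff]
  rintro _ ⟨⟨g, h⟩, rfl⟩
  have e := cj_crossComm_ν₁_eq_cj_ν₂ g h k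
  simp only [cj] at e
  calc crossComm g h * (ν₁ G k / ν₂ G k)
      = ν₁ G k * ((ν₁ G k)⁻¹ * crossComm g h * ν₁ G k) * (ν₂ G k)⁻¹ := by
        rw [div_eq_mul_inv]; group
    _ = ν₁ G k / ν₂ G k * crossComm g h := by rw [e, div_eq_mul_inv]; group

/-- Conjugation by an element `d` of `[G, G^φ]` acts on `[G, G^φ]` as conjugation by
`ν₁ (codiag d)` does. -/
lemma mk_eq_mk_ν₁_codiag {d : nu G} (hd : d ∈ crossCommutator G) :
    (d : nu G ⧸ centralizer (crossCommutator G : Set (nu G))) = ν₁ G (codiag G d) := by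
  let π := QuotientGroup.mk' (centralizer (crossCommutator G : Set (nu G)))
  refine MonoidHom.eqOn_closure (f := π) (g := π.comp ((ν₁ G).comp (codiag G))) ?_ hd
  rintro _ ⟨⟨g, h⟩, rfl⟩
  simp only [MonoidHom.comp_apply, crossComm, map_cm]
  exact congrArg (cm _) (mk_ν₁_eq_mk_ν₂ h).symm

lemma ker_codiag_le_center :
    ((codiag G).comp (crossCommutator G).subtype).ker ≤ center (crossCommutator G) := by
  intro z hz
  replace hz : codiag G z = 1 := hz
  have hzZ : (z : nu G) ∈ centralizer (crossCommutator G : Set (nu G)) := by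
    rw [← QuotientGroup.eq_one_iff, mk_eq_mk_ν₁_codiag z.2, hz, map_one,
      QuotientGroup.mk_one]
  exact mem_center_iff.2 fun x => Subtype.ext (mem_centralizer_iff.1 hzZ x x.2)

instance [Finite G] : (center (crossCommutator G)).FiniteIndex :=
  finiteIndex_of_le ker_codiag_le_center

lemma cj_ν₁_cm {x : nu G} (hx : x ∈ crossCommutator G) (a b : G) :
    cj x (ν₁ G (cm a b)) = cj x (crossComm a b) :=
  cj_eq_of_mk_centralizer_eq hx <| by
    rw [mk_eq_mk_ν₁_codiag (crossComm_mem a b), codiag_crossComm]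

lemma crossComm_mul_left (g g' h : G) :
    crossComm (g * g') h = crossComm (cj g g') (cj h g') * crossComm g' h := by
  rw [← cj_crossComm_ν₁, crossComm, map_mul, cm_mul_left, crossComm, crossComm]

lemma crossComm_mul_right (g h h' : G) :
    crossComm g (h * h') = crossComm g h' * crossComm (cj g h') (cj h h') := by
  rw [← cj_crossComm_ν₂, crossComm, map_mul, cm_mul_right, crossComm, crossComm]

def abCrossComm (g h : G) : Abelianization (crossCommutator G) :=
  Abelianization.of ⟨crossComm g h, crossComm_mem g h⟩

@[simp] lemma abCrossComm_one_left (h : G) : abCrossComm (1 : G) h = 1 := by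
  rw [abCrossComm, ← map_one Abelianization.of]
  exact congrArg _ (Subtype.ext (by simp [crossComm]))

@[simp] lemma abCrossComm_one_right (g : G) : abCrossComm g (1 : G) = 1 := by
  rw [abCrossComm, ← map_one Abelianization.of]
  exact congrArg _ (Subtype.ext (by simp [crossComm]))

lemma abCrossComm_mul_left (g g' h : G) :
    abCrossComm (g * g') h = abCrossComm (cj g g') (cj h g') * abCrossComm g' h := by
  simp only [abCrossComm, ← map_mul]
  exact congrArg _ (Subtype.ext (crossComm_mul_left g g' h))

lemma abCrossComm_mul_right (g h h' : G) :
    abCrossComm g (h * h') = abCrossComm g h' * abCrossComm (cj g h') (cj h h') := by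
  simp only [abCrossComm, ← map_mul]
  exact congrArg _ (Subtype.ext (crossComm_mul_right g h h'))

/-- `ν₁ [a, b]` acts on `[G, G^φ]` as the element `[a, b^φ]` of `[G, G^φ]` does,
hence trivially on its abelianization. -/
lemma abCrossComm_cj_cm (g h a b : G) :
    abCrossComm (cj g (cm a b)) (cj h (cm a b)) = abCrossComm g h := by
  let x : crossCommutator G := ⟨crossComm g h, crossComm_mem g h⟩
  let y : crossCommutator G := ⟨crossComm a b, crossComm_mem a b⟩
  have e : (⟨_, crossComm_mem (cj g (cm a b)) (cj h (cm a b))⟩ : crossCommutator G) = cj x y :=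
    Subtype.ext <| (cj_crossComm_ν₁ g h _).symm.trans (cj_ν₁_cm x.2 a b)
  rw [abCrossComm, e, Abelianization.of_cj]
  rfl

lemma abCrossComm_cm_pow_left (a b h : G) (m : ℕ) :
    abCrossComm (cm a b ^ m) h = abCrossComm (cm a b) h ^ m := by
  induction m with
  | zero => simp
  | succ m ih =>
    rw [pow_succ, abCrossComm_mul_left, abCrossComm_cj_cm, ih, pow_succ]

lemma abCrossComm_cm_pow_right (a b g : G) (m : ℕ) :
    abCrossComm g (cm a b ^ m) = abCrossComm g (cm a b) ^ m := by
  induction m with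
  | zero => simp
  | succ m ih =>
    rw [pow_succ, abCrossComm_mul_right, abCrossComm_cj_cm, ih, pow_succ']

lemma abCrossComm_cm_left_pow_card (a b h : G) : abCrossComm (cm a b) h ^ Nat.card G = 1 := by
  rw [← abCrossComm_cm_pow_left, pow_card_eq_one', abCrossComm_one_left]

lemma abCrossComm_cm_right_pow_card (a b g : G) : abCrossComm g (cm a b) ^ Nat.card G = 1 := by
  rw [← abCrossComm_cm_pow_right, pow_card_eq_one', abCrossComm_one_right]

lemma abCrossComm_cj_pow_card (g h k : G) :
    abCrossComm (cj g k) (cj h k) ^ Nat.card G = abCrossComm g h ^ Nat.card G := by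
  have e : abCrossComm (cj g k) (cj h k) =
      abCrossComm g (cm h k) * abCrossComm g h * abCrossComm (cm g k) (cj h k) := by
    rw [cj_eq_mul_cm g k, abCrossComm_mul_left, abCrossComm_cj_cm, cj_eq_mul_cm h k,
      abCrossComm_mul_right, abCrossComm_cj_cm]
  rw [e, mul_pow, mul_pow, abCrossComm_cm_right_pow_card, abCrossComm_cm_left_pow_card, one_mul,
    mul_one]

lemma abCrossComm_pow_card_mul_card (g h : G) :
    abCrossComm g h ^ (Nat.card G * Nat.card G) = 1 := by
  let φ : G →* Abelianization (crossCommutator G) :=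
    MonoidHom.mk' (fun g => abCrossComm g h ^ Nat.card G) fun g g' => by
      rw [abCrossComm_mul_left, mul_pow, abCrossComm_cj_pow_card]
  rw [pow_mul]
  change φ g ^ Nat.card G = 1
  rw [← map_pow, pow_card_eq_one', map_one]

lemma closure_range_abCrossComm :
    closure (Set.range fun p : G × G => abCrossComm p.1 p.2) = ⊤ := by
  have hgen : closure (((↑) : crossCommutator G → nu G) ⁻¹' crossComms G) = ⊤ :=
    closure_closure_coe_preimage
  rw [← map_top_of_surjective Abelianization.of (QuotientGroup.mk'_surjective _), ← hgen,
    MonoidHom.map_closure]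
  congr 1
  ext t
  constructor
  · rintro ⟨⟨g, h⟩, rfl⟩
    exact ⟨⟨crossComm g h, crossComm_mem g h⟩, ⟨(g, h), rfl⟩, rfl⟩
  · rintro ⟨⟨_, _⟩, ⟨⟨g, h⟩, rfl⟩, rfl⟩
    exact ⟨(g, h), rfl⟩

instance [Finite G] : Finite (Abelianization (crossCommutator G)) := by
  have : Group.FG (Abelianization (crossCommutator G)) :=
    Group.fg_iff.2 ⟨_, closure_range_abCrossComm, Set.finite_range _⟩
  refine CommGroup.finite_of_fg_isMulTorsion _ fun t => isOfFinOrder_iff_pow_eq_one.2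
    ⟨Nat.card G * Nat.card G, Nat.mul_pos Nat.card_pos Nat.card_pos, ?_⟩
  suffices ⊤ ≤ (powMonoidHom (Nat.card G * Nat.card G) :
      Abelianization (crossCommutator G) →* _).ker from this (mem_top t)
  rw [← closure_range_abCrossComm, closure_le]
  rintro _ ⟨⟨g, h⟩, rfl⟩
  exact abCrossComm_pow_card_mul_card g h

instance [Finite G] : Finite (crossCommutator G) :=
  have : Finite (crossCommutator G ⧸ commutator (crossCommutator G)) :=
    inferInstanceAs (Finite (Abelianization _))
  (finite_iff_finite_and_finiteIndex (commutator (crossCommutator G))).2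
    ⟨inferInstance, finiteIndex_of_finite_quotient⟩

instance [Finite G] : Finite (nu G ⧸ crossCommutator G) := by
  let f := (QuotientGroup.mk' (crossCommutator G)).comp (QuotientGroup.mk' (normalClosure (rels G)))
  have hf : Function.Surjective f :=
    (QuotientGroup.mk'_surjective _).comp (QuotientGroup.mk'_surjective _)
  have hcomm (a b : G) : Commute (f.comp Monoid.Coprod.inl a) (f.comp Monoid.Coprod.inr b) :=
    cm_eq_one_iff_commute.1 <| (map_cm (QuotientGroup.mk' _) _ _).symm.trans <|
      (QuotientGroup.eq_one_iff _).2 (crossComm_mem a b)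
  let ψ := MonoidHom.noncommCoprod _ _ hcomm
  have hψ : ψ.comp Monoid.Coprod.toProd = f :=
    Monoid.Coprod.hom_ext (MonoidHom.noncommCoprod_comp_inl (comm := hcomm))
      (MonoidHom.noncommCoprod_comp_inr (comm := hcomm))
  exact Finite.of_surjective ψ (Function.Surjective.of_comp (hψ ▸ hf))

end Rocco

open Rocco in
theorem nu_finite (G : Type*) [Group G] [Finite G] : Finite (nu G) :=
  (finite_iff_finite_and_finiteIndex (crossCommutator G)).2
    ⟨inferInstance, finiteIndex_of_finite_quotient⟩
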